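/- arXiv:0712.3056 — 2 statements merged into one kernel-verified Lean document; each statement's English description precedes it below -/
import Mathlib

section
/- Let X be an N×p real matrix, B a symmetric positive definite p×p matrix, y an N×1 vector, and λ_R > 0. Define A_g = λ_R XᵀX + B and g(λ_R) = (y − λ_R X A_g⁻¹ Xᵀ y)ᵀ(y − λ_R X A_g⁻¹ Xᵀ y) computed as yᵀy + λ_R² yᵀX A_g⁻¹ XᵀX A_g⁻¹ Xᵀy − 2λ_R yᵀX A_g⁻¹ Xᵀy. Then g(λ_R) ≤ yᵀy. -/
/-!
With `A = λ_R XᵀX + B` and `v = A⁻¹ Xᵀ y`, the two quadratic forms in `g` are `|X v|²` and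
`yᵀ X v = vᵀ A v = λ_R |X v|² + vᵀ B v`, so `g = yᵀy - λ_R² |X v|² - 2 λ_R vᵀ B v ≤ yᵀy`.
-/

open Matrix

namespace Matrix

variable {m n R : Type*}

lemma PosDef.isSymm {A : Matrix n n ℝ} (hA : A.PosDef) : A.IsSymm :=
  (conjTranspose_eq_transpose_of_trivial A).symm.trans hA.isHermitian.eq

variable [Fintype m] [Fintype n]

section CommSemiring

variable [CommSemiring R]

lemma dotProduct_mul_mul_transpose_mulVec (X : Matrix m n R) (M : Matrix n n R) (y : m → R) :
    y ⬝ᵥ (X * M * Xᵀ) *ᵥ y = (Xᵀ *ᵥ y) ⬝ᵥ M *ᵥ (Xᵀ *ᵥ y) := by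
  rw [← mulVec_mulVec, ← mulVec_mulVec, dotProduct_mulVec, ← mulVec_transpose]

lemma dotProduct_transpose_mul_self_mulVec (X : Matrix m n R) (v : n → R) :
    v ⬝ᵥ (Xᵀ * X) *ᵥ v = (X *ᵥ v) ⬝ᵥ (X *ᵥ v) := by
  rw [← mulVec_mulVec, dotProduct_mulVec, vecMul_transpose]

lemma dotProduct_mul_mul_transpose_sq_mulVec {M : Matrix n n R} (hM : M.IsSymm)
    (X : Matrix m n R) (y : m → R) :
    y ⬝ᵥ (X * M * Xᵀ * X * M * Xᵀ) *ᵥ y = (X *ᵥ M *ᵥ Xᵀ *ᵥ y) ⬝ᵥ (X *ᵥ M *ᵥ Xᵀ *ᵥ y) := by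
  have hsq : X * M * Xᵀ * X * M * Xᵀ = (X * M * Xᵀ)ᵀ * (X * M * Xᵀ) := by
    simp only [transpose_mul, transpose_transpose, hM.eq, Matrix.mul_assoc]
  rw [hsq, dotProduct_transpose_mul_self_mulVec, ← mulVec_mulVec, ← mulVec_mulVec]

end CommSemiring

lemma dotProduct_nonsing_inv_mulVec [DecidableEq n] [CommRing R] {A : Matrix n n R}
    (hA : IsUnit A.det) (u : n → R) :
    u ⬝ᵥ A⁻¹ *ᵥ u = (A⁻¹ *ᵥ u) ⬝ᵥ A *ᵥ (A⁻¹ *ᵥ u) := by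
  rw [mulVec_mulVec, mul_nonsing_inv A hA, one_mulVec, dotProduct_comm]

lemma PosDef.smul_transpose_mul_self_add {c : ℝ} (hc : 0 ≤ c) (X : Matrix m n ℝ)
    {B : Matrix n n ℝ} (hB : B.PosDef) : (c • (Xᵀ * X) + B).PosDef := by
  have hXX : (Xᵀ * X).PosSemidef := by
    simpa only [conjTranspose_eq_transpose_of_trivial] using posSemidef_conjTranspose_mul_self X
  exact PosDef.posSemidef_add (hXX.smul hc) hB

end Matrix

theorem g_le_yty {N p : ℕ} (X : Matrix (Fin N) (Fin p) ℝ) (B : Matrix (Fin p) (Fin p) ℝ)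
    (y : Fin N → ℝ) (lR : ℝ) (hlR : 0 < lR) (hB : B.PosDef) :
    y ⬝ᵥ y + lR ^ 2 * (y ⬝ᵥ (X * (lR • (Xᵀ * X) + B)⁻¹ * Xᵀ * X * (lR • (Xᵀ * X) + B)⁻¹ * Xᵀ).mulVec y)
      - 2 * lR * (y ⬝ᵥ (X * (lR • (Xᵀ * X) + B)⁻¹ * Xᵀ).mulVec y) ≤ y ⬝ᵥ y := by
  set A := lR • (Xᵀ * X) + B
  have hA : A.PosDef := PosDef.smul_transpose_mul_self_add hlR.le X hB
  set v := A⁻¹ *ᵥ Xᵀ *ᵥ y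
  have hquad : v ⬝ᵥ A *ᵥ v = lR * ((X *ᵥ v) ⬝ᵥ (X *ᵥ v)) + v ⬝ᵥ B *ᵥ v := by
    rw [add_mulVec, dotProduct_add, smul_mulVec, dotProduct_smul, smul_eq_mul,
      dotProduct_transpose_mul_self_mulVec]
  have hK : y ⬝ᵥ (X * A⁻¹ * Xᵀ) *ᵥ y = v ⬝ᵥ A *ᵥ v := by
    rw [dotProduct_mul_mul_transpose_mulVec,
      dotProduct_nonsing_inv_mulVec ((isUnit_iff_isUnit_det A).mp hA.isUnit)]
  have hK2 : y ⬝ᵥ (X * A⁻¹ * Xᵀ * X * A⁻¹ * Xᵀ) *ᵥ y = (X *ᵥ v) ⬝ᵥ (X *ᵥ v) :=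
    dotProduct_mul_mul_transpose_sq_mulVec hA.inv.isSymm X y
  rw [hK, hK2, hquad]
  have hXv : 0 ≤ lR ^ 2 * ((X *ᵥ v) ⬝ᵥ (X *ᵥ v)) :=
    mul_nonneg (sq_nonneg lR) (dotProduct_self_star_nonneg (X *ᵥ v))
  have hBv : 0 ≤ lR * (v ⬝ᵥ B *ᵥ v) :=
    mul_nonneg hlR.le (hB.posSemidef.dotProduct_mulVec_nonneg v)
  linarith
end

section
/- Let V : ℝ^{k+p} → ℝ be defined by V(ξ) = v₁(ξ) + v₂(ξ) where, writing ξ = (uᵀ, βᵀ)ᵀ with u ∈ ℝᵏ and β ∈ ℝᵖ, v₁(ξ) = (y − Xβ − Zu)ᵀ(y − Xβ − Zu) and v₂(ξ) = uᵀu, with X an N×p matrix of full column rank p and Z an N×k matrix. Then V is unbounded off compact sets: for every d > 0, the sublevel set {ξ : V(ξ) ≤ d} is compact. -/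
/-!
Writing `ξ = (u, β)`, the sublevel set `{V ≤ d}` is the preimage of the compact set
`{(w, u) | ‖y - w‖² + ‖u‖² ≤ d}` under the linear map `(u, β) ↦ (Xβ + Zu, u)`. Full column rank
of `X` makes this map injective, so it is a closed embedding of finite-dimensional spaces and
hence proper.
-/

open Matrix

theorem Matrix.mulVec_injective_of_rank_eq_card {K m n : Type*} [Field K] [Fintype n]
    {A : Matrix m n K} (hA : A.rank = Fintype.card n) :
    Function.Injective A.mulVec := by
  rw [mulVec_injective_iff, linearIndependent_iff_card_eq_finrank_span, ← hA,
    rank_eq_finrank_span_cols, Set.finrank]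

theorem LinearMap.ker_prod_fst_eq_bot {R M₁ M₂ N : Type*} [Ring R] [AddCommGroup M₁]
    [AddCommGroup M₂] [AddCommGroup N] [Module R M₁] [Module R M₂] [Module R N]
    {f : M₂ →ₗ[R] N} (g : M₁ →ₗ[R] N) (hf : ker f = ⊥) :
    ker ((f ∘ₗ snd R M₁ M₂ + g ∘ₗ fst R M₁ M₂).prod (fst R M₁ M₂)) = ⊥ := by
  rw [ker_eq_bot']
  rintro ⟨u, β⟩ h
  obtain rfl : u = 0 := congrArg Prod.snd h
  have hβ : f β = 0 := by simpa using congrArg Prod.fst h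
  rw [← mem_ker, hf, Submodule.mem_bot] at hβ
  rw [hβ, Prod.mk_zero_zero]

theorem isCompact_setOf_dotProduct_self_le {ι : Type*} [Fintype ι] (d : ℝ) :
    IsCompact {v : ι → ℝ | v ⬝ᵥ v ≤ d} := by
  refine Metric.isCompact_of_isClosed_isBounded
    (isClosed_le (continuous_id.dotProduct continuous_id) continuous_const) ?_
  refine (Metric.isBounded_iff_subset_closedBall 0).2 ⟨√d, fun v hv => ?_⟩
  rw [Metric.mem_closedBall, dist_zero_right, pi_norm_le_iff_of_nonneg (Real.sqrt_nonneg d)]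
  intro i
  refine Real.abs_le_sqrt ?_
  calc v i ^ 2 = v i * v i := sq (v i)
    _ ≤ v ⬝ᵥ v := Finset.single_le_sum (fun j _ => mul_self_nonneg (v j)) (Finset.mem_univ i)
    _ ≤ d := hv

theorem isCompact_setOf_sub_dotProduct_self_add_dotProduct_self_le {m n : Type*} [Fintype m]
    [Fintype n] (y : m → ℝ) (d : ℝ) :
    IsCompact {q : (m → ℝ) × (n → ℝ) | (y - q.1) ⬝ᵥ (y - q.1) + q.2 ⬝ᵥ q.2 ≤ d} := by
  have hu_compact : IsCompact {v : n → ℝ | v ⬝ᵥ v ≤ d} := isCompact_setOf_dotProduct_self_le d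
  have hw_compact : IsCompact ((y - ·) ⁻¹' {v : m → ℝ | v ⬝ᵥ v ≤ d}) :=
    (Homeomorph.subLeft y).isCompact_preimage.2 (isCompact_setOf_dotProduct_self_le d)
  refine (hw_compact.prod hu_compact).of_isClosed_subset (isClosed_le (by fun_prop) continuous_const) ?_
  rintro ⟨w, u⟩ (h : _ ≤ d)
  have hw_nonneg : 0 ≤ (y - w) ⬝ᵥ (y - w) := Fintype.sum_nonneg fun i => mul_self_nonneg _
  have hu_nonneg : 0 ≤ u ⬝ᵥ u := Fintype.sum_nonneg fun i => mul_self_nonneg _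
  exact ⟨show (y - w) ⬝ᵥ (y - w) ≤ d by linarith, show u ⬝ᵥ u ≤ d by linarith⟩

theorem drift_function_unbounded_off_compact_general {N k p : ℕ}
    (X : Matrix (Fin N) (Fin p) ℝ) (Z : Matrix (Fin N) (Fin k) ℝ) (y : Fin N → ℝ)
    (hX : X.rank = p) (d : ℝ) :
    IsCompact {ξ : (Fin k → ℝ) × (Fin p → ℝ) |
      (y - X.mulVec ξ.2 - Z.mulVec ξ.1) ⬝ᵥ (y - X.mulVec ξ.2 - Z.mulVec ξ.1)
        + ξ.1 ⬝ᵥ ξ.1 ≤ d} := by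
  have hXinj : LinearMap.ker X.mulVecLin = ⊥ :=
    LinearMap.ker_eq_bot.2 (mulVec_injective_of_rank_eq_card (by rwa [Fintype.card_fin]))
  let L := (X.mulVecLin ∘ₗ LinearMap.snd ℝ _ _ + Z.mulVecLin ∘ₗ LinearMap.fst ℝ _ _).prod
    (LinearMap.fst ℝ (Fin k → ℝ) (Fin p → ℝ))
  have hL : Topology.IsClosedEmbedding L :=
    L.isClosedEmbedding_of_injective (LinearMap.ker_prod_fst_eq_bot _ hXinj)
  simp only [sub_sub]
  exact hL.isProperMap.isCompact_preimage
    (isCompact_setOf_sub_dotProduct_self_add_dotProduct_self_le y d)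

/-- The drift function `V(ξ) = v₁(ξ) + v₂(ξ)` is unbounded off compact sets. -/
theorem drift_function_unbounded_off_compact {N k p : ℕ}
    (X : Matrix (Fin N) (Fin p) ℝ) (Z : Matrix (Fin N) (Fin k) ℝ) (y : Fin N → ℝ)
    (hX : X.rank = p) (d : ℝ) (hd : 0 < d) :
    IsCompact {ξ : (Fin k → ℝ) × (Fin p → ℝ) |
      (y - X.mulVec ξ.2 - Z.mulVec ξ.1) ⬝ᵥ (y - X.mulVec ξ.2 - Z.mulVec ξ.1)
        + ξ.1 ⬝ᵥ ξ.1 ≤ d} :=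
  drift_function_unbounded_off_compact_general X Z y hX d
end
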